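/- Let A be a linearly topologized commutative topological ring (the topology admits a basis of neighborhoods of 0 consisting of ideals) and let σ: A → Â be the canonical map to its completion, which is again a topological ring. Then the mutually inverse bijections B ↦ (closure of σ(B) in Â) and C ↦ σ⁻¹(C) between the set of open subrings of A and the set of open subrings of Â restrict to a bijection between the open subrings of A that are integrally closed in A and the open subrings of Â that are integrally closed in Â. In particular, if B is an open subring of A integrally closed in A, then the closure of σ(B) in Â is an open subring integrally closed in Â and σ⁻¹(closure of σ(B)) = B. -/

import Mathlib

/-!
Apart from integral closedness of `C = closure σ(B)`, everything is point-set topology of the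
dense embedding `σ`, together with the fact that open subgroups are closed. For that step choose an
open ideal `I ⊆ B`: the closure `J` of `σ(I)` is an open ideal of `Â` inside `C`, and `A → Â/J`
is onto by density. Since `J ⊆ C`, both `C` and `B = σ⁻¹(C)` are preimages of the image of `C` in
`Â/J`. Integral closedness passes to preimages, and it descends along the surjection `A → Â/J`
because monic polynomials lift along surjections.
-/

open Polynomial Topology UniformSpace

namespace Subring

section Integrality

variable {R S : Type*} [CommRing R] [CommRing S] {f : R →+* S} {C : Subring S}

theorem mem_comap_of_isIntegral (hC : ∀ x, IsIntegral C x → x ∈ C) {a : R}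
    (ha : IsIntegral (C.comap f) a) : a ∈ C.comap f :=
  hC _ <| ha.map_of_comp_eq (f.restrict _ C fun _ h ↦ h) f rfl

theorem mem_of_isIntegral_of_surjective (hf : Function.Surjective f)
    (hC : ∀ a, IsIntegral (C.comap f) a → a ∈ C.comap f) {x : S} (hx : IsIntegral C x) :
    x ∈ C := by
  nontriviality S
  obtain ⟨a, rfl⟩ := hf x
  obtain ⟨p, hp, hpx⟩ := hx
  let φ : C.comap f →+* C := f.restrict _ C fun _ h ↦ h
  have hφ : Function.Surjective φ := fun c ↦
    let ⟨r, hr⟩ := hf c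
    ⟨⟨r, show f r ∈ C from hr ▸ c.2⟩, Subtype.ext hr⟩
  -- multiplying by `X` makes the degree positive, as `IsIntegral.of_aeval_monic` requires
  obtain ⟨q, hqp, hdeg, hq⟩ :=
    lifts_and_natDegree_eq_and_monic (mem_lifts_of_surjective hφ (p * X)) (hp.mul monic_X)
  have hq_root : f (aeval a q) = 0 := by
    rw [aeval_def, hom_eval₂]
    have : f.comp (algebraMap (C.comap f) R) = (algebraMap C S).comp φ := rfl
    rw [this, ← eval₂_map, hqp, eval₂_mul, hpx, zero_mul]
  have hq_mem : aeval a q ∈ C.comap f := by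
    simp [mem_comap, hq_root, C.zero_mem]
  exact hC a <| .of_aeval_monic hq (by simp [hdeg, hp.ne_zero])
    (isIntegral_algebraMap (x := (⟨_, hq_mem⟩ : C.comap f)))

theorem mem_of_isIntegral_of_le_of_surjective_quotient (J : Ideal S) (hJC : (J : Set S) ⊆ C)
    (hf : Function.Surjective ((Ideal.Quotient.mk J).comp f))
    (hC : ∀ a, IsIntegral (C.comap f) a → a ∈ C.comap f) {x : S} (hx : IsIntegral C x) :
    x ∈ C := by
  set D := C.map (Ideal.Quotient.mk J)
  have hDC : D.comap (Ideal.Quotient.mk J) = C :=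
    comap_map_eq_self fun y hy ↦ hJC (Ideal.Quotient.eq_zero_iff_mem.mp hy)
  rw [← hDC] at hx hC ⊢
  rw [comap_comap] at hC
  exact mem_comap_of_isIntegral (fun _ ↦ mem_of_isIntegral_of_surjective hf hC) hx

end Integrality

end Subring

section Topology

variable {R S : Type*} [CommRing R] [CommRing S] [TopologicalSpace S] [IsTopologicalRing S]
  {f : R →+* S}

theorem exists_ideal_coe_eq_closure_image (hf : DenseRange f) (I : Ideal R) :
    ∃ J : Ideal S, (J : Set S) = closure (f '' I) := by
  let K := (I.toAddSubgroup.map f.toAddMonoidHom).topologicalClosure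
  refine ⟨{ K with smul_mem' := fun s x hx ↦ ?_ }, rfl⟩
  have hclosed : IsClosed {s : S | s * x ∈ K} :=
    isClosed_closure.preimage (continuous_mul_const x)
  have hrange : Set.range f ⊆ {s : S | s * x ∈ K} := by
    rintro _ ⟨r, rfl⟩
    exact map_mem_closure (continuous_const_mul (f r)) hx
      (by rintro _ ⟨i, hi, rfl⟩; exact ⟨r * i, I.mul_mem_left r hi, map_mul f r i⟩)
  exact closure_minimal hrange hclosed (hf.closure_range ▸ Set.mem_univ s)

theorem DenseRange.surjective_quotientMk_comp (hf : DenseRange f) {J : Ideal S}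
    (hJ : IsOpen (J : Set S)) : Function.Surjective ((Ideal.Quotient.mk J).comp f) := by
  intro y
  obtain ⟨s, rfl⟩ := Ideal.Quotient.mk_surjective y
  obtain ⟨r, hr⟩ := hf.exists_mem_open (hJ.preimage (continuous_sub_left s)) ⟨s, by simp⟩
  exact ⟨r, Ideal.Quotient.eq.mpr (by simpa using J.neg_mem hr)⟩

namespace Subring

theorem coe_topologicalClosure (B : Subring S) :
    (B.topologicalClosure : Set S) = _root_.closure B :=
  rfl

theorem topologicalClosure_map_comap (hf : DenseRange f) {C : Subring S}
    (hC : IsOpen (C : Set S)) : ((C.comap f).map f).topologicalClosure = C := by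
  refine SetLike.coe_injective (subset_antisymm ?_ ?_) <;>
    rw [coe_topologicalClosure, coe_map, coe_comap]
  · exact closure_minimal (Set.image_preimage_subset _ _) (C.toAddSubgroup.isClosed_of_isOpen hC)
  · simpa only [Set.image_preimage_eq_inter_range] using hf.open_subset_closure_inter hC

variable [TopologicalSpace R] {B : Subring R}

theorem isOpen_topologicalClosure_map (hf : IsDenseInducing f) (hB : IsOpen (B : Set R)) :
    IsOpen ((B.map f).topologicalClosure : Set S) := by
  refine (B.map f).topologicalClosure.toAddSubgroup.isOpen_of_mem_nhds (g := 0) ?_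
  simpa [coe_topologicalClosure] using hf.closure_image_mem_nhds (hB.mem_nhds B.zero_mem)

variable [IsTopologicalRing R]

theorem comap_topologicalClosure_map (hf : IsInducing f) (hB : IsOpen (B : Set R)) :
    (B.map f).topologicalClosure.comap f = B :=
  SetLike.coe_injective <| by
    rw [coe_comap, coe_topologicalClosure, coe_map, ← hf.closure_eq_preimage_closure_image]
    exact (B.toAddSubgroup.isClosed_of_isOpen hB).closure_eq

theorem mem_topologicalClosure_map_of_isIntegral (hf : IsDenseInducing f)
    (hlin : ∀ U ∈ 𝓝 (0 : R), ∃ I : Ideal R, (I : Set R) ∈ 𝓝 (0 : R) ∧ (I : Set R) ⊆ U)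
    (hB : IsOpen (B : Set R)) (hBint : ∀ a : R, IsIntegral B a → a ∈ B) {x : S}
    (hx : IsIntegral (B.map f).topologicalClosure x) : x ∈ (B.map f).topologicalClosure := by
  obtain ⟨I, hI, hIB⟩ := hlin B (hB.mem_nhds B.zero_mem)
  obtain ⟨J, hJ⟩ := exists_ideal_coe_eq_closure_image hf.dense I
  have hJ_open : IsOpen (J : Set S) := J.toAddSubgroup.isOpen_of_mem_nhds (g := 0) <| by
    simpa [hJ] using hf.closure_image_mem_nhds hI
  have hJC : (J : Set S) ⊆ (B.map f).topologicalClosure :=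
    hJ ▸ _root_.closure_mono (Set.image_mono hIB)
  refine mem_of_isIntegral_of_le_of_surjective_quotient J hJC
    (hf.dense.surjective_quotientMk_comp hJ_open) ?_ hx
  rwa [comap_topologicalClosure_map hf.isInducing hB]

end Subring

end Topology

theorem statement5 {A : Type*} [CommRing A] [UniformSpace A] [IsUniformAddGroup A]
    [IsTopologicalRing A]
    (hlin : ∀ U ∈ nhds (0 : A), ∃ I : Ideal A, (I : Set A) ∈ nhds (0 : A) ∧ (I : Set A) ⊆ U) :
    (∀ B : Subring A, IsOpen (B : Set A) → (∀ x : A, IsIntegral ↥B x → x ∈ B) →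
      (IsOpen (((B.map (Completion.coeRingHom : A →+* Completion A)).topologicalClosure :
          Subring (Completion A)) : Set (Completion A)) ∧
       (∀ x : Completion A,
          IsIntegral ↥((B.map (Completion.coeRingHom : A →+* Completion A)).topologicalClosure)
            x → x ∈ (B.map (Completion.coeRingHom : A →+* Completion A)).topologicalClosure) ∧
       Subring.comap (Completion.coeRingHom : A →+* Completion A)
          ((B.map (Completion.coeRingHom : A →+* Completion A)).topologicalClosure) = B)) ∧
    (∀ C : Subring (Completion A), IsOpen (C : Set (Completion A)) →
      (∀ x : Completion A, IsIntegral ↥C x → x ∈ C) →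
      (IsOpen ((Subring.comap (Completion.coeRingHom : A →+* Completion A) C : Subring A) :
          Set A) ∧
       (∀ x : A,
          IsIntegral ↥(Subring.comap (Completion.coeRingHom : A →+* Completion A) C) x →
            x ∈ Subring.comap (Completion.coeRingHom : A →+* Completion A) C) ∧
       ((Subring.comap (Completion.coeRingHom : A →+* Completion A) C).map
          (Completion.coeRingHom : A →+* Completion A)).topologicalClosure = C)) := by
  have hσ : IsDenseInducing (Completion.coeRingHom : A →+* Completion A) :=
    Completion.isDenseInducing_coe
  refine ⟨fun B hB hBint ↦ ⟨?_, ?_, ?_⟩, fun C hC hCint ↦ ⟨?_, ?_, ?_⟩⟩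
  · exact Subring.isOpen_topologicalClosure_map hσ hB
  · exact fun x ↦ Subring.mem_topologicalClosure_map_of_isIntegral hσ hlin hB hBint
  · exact Subring.comap_topologicalClosure_map hσ.isInducing hB
  · exact hC.preimage Completion.continuous_coeRingHom
  · exact fun a ↦ Subring.mem_comap_of_isIntegral hCint
  · exact Subring.topologicalClosure_map_comap hσ.dense hC
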